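/- arXiv:2509.13058 — 2 statements merged into one kernel-verified Lean document; each statement's English description precedes it below -/
import Mathlib

section
/- Let 𝒞 be a class of locally finite transitive Kripke frames closed under generated subframes, under surjective p-morphic images, and under binary disjoint unions, and consider the category whose objects are the frames in 𝒞 and whose morphisms are p-morphisms. Then a morphism f : W → V in this category is an extremal epimorphism (an epimorphism that does not factor through any proper subobject of its codomain) if and only if f is surjective. -/
open CategoryTheory

universe u

/-- A p-morphism between Kripke frames `(W, rW)` and `(V, rV)`:
a function that is stable and open. -/
def IsPMorphism {W V : Type*} (rW : W → W → Prop) (rV : V → V → Prop) (f : W → V) : Prop :=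
  (∀ ⦃w w'⦄, rW w w' → rV (f w) (f w')) ∧
  (∀ w v', rV (f w) v' → ∃ w', rW w w' ∧ f w' = v')

/-- A Kripke frame: a set together with a binary relation on it. -/
structure KFrame : Type (u + 1) where
  carrier : Type u
  rel : carrier → carrier → Prop

instance : CoeSort KFrame.{u} (Type u) := ⟨KFrame.carrier⟩

/-- Bundled p-morphisms between Kripke frames. -/
structure PMor (W V : KFrame.{u}) : Type u where
  toFun : W → V
  isPMorphism : IsPMorphism W.rel V.rel toFun

@[ext] lemma PMor.ext {W V : KFrame.{u}} {f g : PMor W V} (h : f.toFun = g.toFun) : f = g := by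
  cases f; cases g; simpa using h

/-- The category `KFr` of Kripke frames and p-morphisms. -/
instance : Category KFrame.{u} where
  Hom := PMor
  id W := ⟨id, fun _ _ h => h, fun w v' h => ⟨v', h, rfl⟩⟩
  comp f g := ⟨g.toFun ∘ f.toFun,
    fun _ _ h => g.isPMorphism.1 (f.isPMorphism.1 h),
    fun w z h => by
      obtain ⟨v', hv', hgz⟩ := g.isPMorphism.2 _ z h
      obtain ⟨w', hw', hfv⟩ := f.isPMorphism.2 w v' hv'
      exact ⟨w', hw', by simp [Function.comp, hfv, hgz]⟩⟩
  id_comp f := PMor.ext rfl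
  comp_id f := PMor.ext rfl
  assoc f g h := PMor.ext rfl

/-- The disjoint union of two Kripke frames, with the disjoint union of the relations. -/
def KFrame.sum (W V : KFrame.{u}) : KFrame.{u} :=
  ⟨W.carrier ⊕ V.carrier, Sum.LiftRel W.rel V.rel⟩

/-- The generated subframe of a Kripke frame determined by a subset (with the
restricted relation). -/
def KFrame.subframe (W : KFrame.{u}) (G : Set W.carrier) : KFrame.{u} :=
  ⟨G, fun a b => W.rel a.1 b.1⟩

/-- A Kripke frame is locally finite if for each point `w` the set `w*` of points
reachable from `w` by a finite chain is finite. -/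
def KFrame.LocallyFinite (W : KFrame.{u}) : Prop :=
  ∀ w : W.carrier, {w' | Relation.ReflTransGen W.rel w w'}.Finite

/-- An extremal epimorphism: an epimorphism that does not factor through any proper
subobject of its codomain, i.e. whenever `f = g ≫ m` with `m` a monomorphism,
`m` is an isomorphism. -/
def ExtremalEpi {C : Type*} [CategoryTheory.Category C] {X Y : C} (f : X ⟶ Y) : Prop :=
  CategoryTheory.Epi f ∧
    ∀ ⦃Z : C⦄ (g : X ⟶ Z) (m : Z ⟶ Y), CategoryTheory.Mono m →
      g ≫ m = f → CategoryTheory.IsIso m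


section Auxiliary

open Relation

private lemma rtg_of_trans {α : Type*} {r : α → α → Prop} (htr : Transitive r) {a b : α}
    (h : Relation.ReflTransGen r a b) : a = b ∨ r a b := by
  induction h with
  | refl => exact Or.inl rfl
  | tail h1 h2 ih =>
    rcases ih with rfl | h3
    · exact Or.inr h2
    · exact Or.inr (htr h3 h2)

lemma incl_pmor {Z : KFrame.{u}} {G : Set Z.carrier}
    (hup : ∀ w ∈ G, ∀ w', Z.rel w w' → w' ∈ G) :
    IsPMorphism (KFrame.subframe Z G).rel Z.rel Subtype.val :=
  ⟨fun _ _ h => h, fun w v' h => ⟨⟨v', hup _ w.2 _ h⟩, h, rfl⟩⟩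

/-- Key combinatorial lemma: a non-injective p-morphism `m` out of a locally finite
transitive frame is equalized by two distinct p-morphisms from a generated subframe. -/
lemma key_lemma {Z Y : KFrame.{u}} (hlfZ : Z.LocallyFinite) (htrZ : Transitive Z.rel)
    (m : PMor Z Y) (z1 z2 : Z.carrier) (hne12 : z1 ≠ z2)
    (heq12 : m.toFun z1 = m.toFun z2) :
    ∃ G : Set Z.carrier, (∀ w ∈ G, ∀ w', Z.rel w w' → w' ∈ G) ∧
      ∃ s : (KFrame.subframe Z G).carrier → Z.carrier,
        IsPMorphism (KFrame.subframe Z G).rel Z.rel s ∧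
        (∀ x, m.toFun (s x) = m.toFun x.1) ∧
        ∃ x, s x ≠ x.1 := by
  classical
  by_cases hI : ∃ p q, p ≠ q ∧ Z.rel p q ∧ Z.rel q p ∧ m.toFun p = m.toFun q
  · -- Case I : two distinct co-clustered points with the same image; swap them.
    obtain ⟨p, q, hpq, hrpq, hrqp, hmpq⟩ := hI
    have swap_stab : ∀ a b, Z.rel a b →
        Z.rel (if a = p then q else if a = q then p else a)
          (if b = p then q else if b = q then p else b) := by
      intro a b hab
      by_cases h1 : a = p
      · rw [if_pos h1]
        rw [h1] at hab
        by_cases h3 : b = p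
        · rw [if_pos h3]; exact htrZ hrqp hrpq
        · rw [if_neg h3]
          by_cases h4 : b = q
          · rw [if_pos h4]; exact hrqp
          · rw [if_neg h4]; exact htrZ hrqp hab
      · rw [if_neg h1]
        by_cases h2 : a = q
        · rw [if_pos h2]
          rw [h2] at hab
          by_cases h3 : b = p
          · rw [if_pos h3]; exact hrpq
          · rw [if_neg h3]
            by_cases h4 : b = q
            · rw [if_pos h4]; exact htrZ hrpq hrqp
            · rw [if_neg h4]; exact htrZ hrpq hab
        · rw [if_neg h2]
          by_cases h3 : b = p
          · rw [if_pos h3]; rw [h3] at hab; exact htrZ hab hrpq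
          · rw [if_neg h3]
            by_cases h4 : b = q
            · rw [if_pos h4]; rw [h4] at hab; exact htrZ hab hrqp
            · rw [if_neg h4]; exact hab
    have hswapinv : ∀ x, (if (if x = p then q else if x = q then p else x) = p then q
        else if (if x = p then q else if x = q then p else x) = q then p
        else (if x = p then q else if x = q then p else x)) = x := by
      intro x
      by_cases h1 : x = p
      · rw [if_pos h1, if_neg (show q ≠ p from fun h => hpq h.symm), if_pos rfl]
        exact h1.symm
      · by_cases h2 : x = q
        · rw [if_neg h1, if_pos h2, if_pos rfl]
          exact h2.symm
        · rw [if_neg h1, if_neg h2, if_neg h1, if_neg h2]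
    have hmswap : ∀ x, m.toFun (if x = p then q else if x = q then p else x) = m.toFun x := by
      intro x
      by_cases h1 : x = p
      · rw [if_pos h1, h1]; exact hmpq.symm
      · rw [if_neg h1]
        by_cases h2 : x = q
        · rw [if_pos h2, h2]; exact hmpq
        · rw [if_neg h2]
    refine ⟨Set.univ, fun _ _ _ _ => trivial,
      fun x => if x.1 = p then q else if x.1 = q then p else x.1,
      ⟨fun a b h => swap_stab a.1 b.1 h, ?_⟩, fun x => hmswap x.1, ⟨⟨p, trivial⟩, ?_⟩⟩
    · intro a v' h
      refine ⟨⟨if v' = p then q else if v' = q then p else v', trivial⟩, ?_, hswapinv v'⟩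
      have h2 := swap_stab _ _ h
      rwa [hswapinv a.1] at h2
    · show (if p = p then q else if p = q then p else p) ≠ p
      rw [if_pos rfl]
      exact Ne.symm hpq
  · -- Case II : no co-clustered pair.  Pick a minimal non-injectivity witness.
    have hex : ∃ n, ∃ a b, a ≠ b ∧ m.toFun a = m.toFun b ∧
        {w | Relation.ReflTransGen Z.rel a w}.ncard = n :=
      ⟨_, z1, z2, hne12, heq12, rfl⟩
    obtain ⟨u, v, huv, hmuv, hucard⟩ := Nat.find_spec hex
    have hmin : ∀ a b, a ≠ b → m.toFun a = m.toFun b →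
        {w | Relation.ReflTransGen Z.rel u w}.ncard ≤
          {w | Relation.ReflTransGen Z.rel a w}.ncard := by
      intro a b h1 h2
      rw [hucard]
      by_contra hlt
      exact Nat.find_min hex (not_le.mp hlt) ⟨a, b, h1, h2, rfl⟩
    have rigid : ∀ w, {w' | Relation.ReflTransGen Z.rel w w'}.ncard <
        {w' | Relation.ReflTransGen Z.rel u w'}.ncard →
        ∀ x, m.toFun w = m.toFun x → x = w := by
      intro w hlt x hmx
      by_contra hxw
      exact absurd (hmin w x (fun h => hxw h.symm) hmx) (not_le.mpr hlt)
    have star_sub : ∀ w, Z.rel u w → ¬ Z.rel w u →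
        {w' | Relation.ReflTransGen Z.rel w w'}.ncard <
        {w' | Relation.ReflTransGen Z.rel u w'}.ncard := by
      intro w h1 h2
      have hsub : {w' | Relation.ReflTransGen Z.rel w w'} ⊆
          {w' | Relation.ReflTransGen Z.rel u w'} :=
        fun x hx => (ReflTransGen.single h1).trans hx
      have hmem : u ∉ {w' | Relation.ReflTransGen Z.rel w w'} := by
        intro hu
        rcases rtg_of_trans htrZ hu with rfl | h
        · exact h2 h1
        · exact h2 h
      have hne' : {w' | Relation.ReflTransGen Z.rel w w'} ≠
          {w' | Relation.ReflTransGen Z.rel u w'} := by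
        intro he
        apply hmem
        rw [he]
        exact ReflTransGen.refl
      exact Set.ncard_lt_ncard (HasSubset.Subset.ssubset_of_ne hsub hne') (hlfZ u)
    by_cases huu : Z.rel u u
    · -- Case II.2 : u reflexive.  K = cluster of u, project the cone of v onto K ∪ D.
      have hKrelu : ∀ k, (k = u ∨ (Z.rel u k ∧ Z.rel k u)) → Z.rel k u := by
        rintro k (rfl | ⟨_, h⟩)
        · exact huu
        · exact h
      have hKurel : ∀ k, (k = u ∨ (Z.rel u k ∧ Z.rel k u)) → Z.rel u k := by
        rintro k (rfl | ⟨h, _⟩)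
        · exact huu
        · exact h
      have hKrel : ∀ k, (k = u ∨ (Z.rel u k ∧ Z.rel k u)) → ∀ k',
          (k' = u ∨ (Z.rel u k' ∧ Z.rel k' u)) → Z.rel k k' :=
        fun k hk k' hk' => htrZ (hKrelu k hk) (hKurel k' hk')
      have hKinj : ∀ k, (k = u ∨ (Z.rel u k ∧ Z.rel k u)) → ∀ k',
          (k' = u ∨ (Z.rel u k' ∧ Z.rel k' u)) → m.toFun k = m.toFun k' → k = k' := by
        intro k hk k' hk' hm'
        by_contra hne
        exact hI ⟨k, k', hne, hKrel k hk k' hk', hKrel k' hk' k hk, hm'⟩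
      have hDrigid : ∀ d, Z.rel u d → ¬ Z.rel d u → ∀ x, m.toFun x = m.toFun d → x = d :=
        fun d h1 h2 x hx => rigid d (star_sub d h1 h2) x hx.symm
      have hsucc : ∀ k, (k = u ∨ (Z.rel u k ∧ Z.rel k u)) → ∀ y, Z.rel k y →
          (y = u ∨ (Z.rel u y ∧ Z.rel y u)) ∨ (Z.rel u y ∧ ¬ Z.rel y u) := by
        intro k hk y hy
        have huy : Z.rel u y := htrZ (hKurel k hk) hy
        by_cases hyu : Z.rel y u
        · exact Or.inl (Or.inr ⟨huy, hyu⟩)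
        · exact Or.inr ⟨huy, hyu⟩
      have hnoDK : ∀ d, Z.rel u d → ¬ Z.rel d u → ∀ k, (k = u ∨ (Z.rel u k ∧ Z.rel k u)) →
          ¬ Z.rel d k := fun d h1 h2 k hk h => h2 (htrZ h (hKrelu k hk))
      have hDnotS : ∀ d, Z.rel u d → ¬ Z.rel d u →
          ¬ ∃ k, (k = u ∨ (Z.rel u k ∧ Z.rel k u)) ∧ m.toFun k = m.toFun d := by
        rintro d h1 h2 ⟨k, hk, hmk⟩
        have hkd : k = d := hDrigid d h1 h2 k hmk
        exact h2 (hKrelu d (hkd ▸ hk))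
      have hdich : ∀ x, Relation.ReflTransGen Z.rel v x →
          (∃ k, (k = u ∨ (Z.rel u k ∧ Z.rel k u)) ∧ m.toFun k = m.toFun x) ∨
          (Z.rel u x ∧ ¬ Z.rel x u) := by
        intro x hx
        induction hx with
        | refl => exact Or.inl ⟨u, Or.inl rfl, hmuv⟩
        | @tail b c hab hbc ih =>
          rcases ih with ⟨k, hk, hmk⟩ | ⟨hub, hbu⟩
          · obtain ⟨w', hkw', hmw'⟩ := m.isPMorphism.2 k (m.toFun c)
              (by rw [hmk]; exact m.isPMorphism.1 hbc)
            rcases hsucc k hk w' hkw' with h | ⟨h1, h2⟩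
            · exact Or.inl ⟨w', h, hmw'⟩
            · right
              have hcd : c = w' := hDrigid w' h1 h2 c hmw'.symm
              rw [hcd]
              exact ⟨h1, h2⟩
          · right
            have huc : Z.rel u c := htrZ hub hbc
            by_cases hcu : Z.rel c u
            · exact absurd hbc (hnoDK b hub hbu c (Or.inr ⟨huc, hcu⟩))
            · exact ⟨huc, hcu⟩
      have hDS : ∀ x, (∃ k, (k = u ∨ (Z.rel u k ∧ Z.rel k u)) ∧ m.toFun k = m.toFun x) →
          ∀ d, Z.rel u d → ¬ Z.rel d u → Z.rel x d := by
        rintro x ⟨k, hk, hmk⟩ d h1 h2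
        obtain ⟨y, hxy, hmy⟩ := m.isPMorphism.2 x (m.toFun d)
          (hmk ▸ m.isPMorphism.1 (htrZ (hKrelu k hk) h1))
        have hyd : y = d := hDrigid d h1 h2 y hmy
        rwa [hyd] at hxy
      set s0 : Z.carrier → Z.carrier := fun x =>
        if h : ∃ k, (k = u ∨ (Z.rel u k ∧ Z.rel k u)) ∧ m.toFun k = m.toFun x
        then h.choose else x with hs0def
      have hs0pos : ∀ x (h : ∃ k, (k = u ∨ (Z.rel u k ∧ Z.rel k u)) ∧ m.toFun k = m.toFun x),
          (s0 x = u ∨ (Z.rel u (s0 x) ∧ Z.rel (s0 x) u)) ∧ m.toFun (s0 x) = m.toFun x := by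
        intro x h
        have hx : s0 x = h.choose := by simp only [hs0def]; exact dif_pos h
        rw [hx]
        exact h.choose_spec
      have hs0neg : ∀ x, ¬(∃ k, (k = u ∨ (Z.rel u k ∧ Z.rel k u)) ∧ m.toFun k = m.toFun x) →
          s0 x = x := by
        intro x h
        simp only [hs0def]
        exact dif_neg h
      have hs0m : ∀ x, m.toFun (s0 x) = m.toFun x := by
        intro x
        by_cases h : ∃ k, (k = u ∨ (Z.rel u k ∧ Z.rel k u)) ∧ m.toFun k = m.toFun x
        · exact (hs0pos x h).2
        · rw [hs0neg x h]
      have hstab : ∀ a, Relation.ReflTransGen Z.rel v a → ∀ b, Z.rel a b →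
          Z.rel (s0 a) (s0 b) := by
        intro a ha b hab
        have hbG : Relation.ReflTransGen Z.rel v b := ha.tail hab
        by_cases haS : ∃ k, (k = u ∨ (Z.rel u k ∧ Z.rel k u)) ∧ m.toFun k = m.toFun a
        · have hsaK := (hs0pos a haS).1
          by_cases hbS : ∃ k, (k = u ∨ (Z.rel u k ∧ Z.rel k u)) ∧ m.toFun k = m.toFun b
          · exact hKrel _ hsaK _ (hs0pos b hbS).1
          · obtain ⟨h1, h2⟩ := (hdich b hbG).resolve_left hbS
            rw [hs0neg b hbS]
            exact htrZ (hKrelu _ hsaK) h1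
        · obtain ⟨h1, h2⟩ := (hdich a ha).resolve_left haS
          have hbD : Z.rel u b ∧ ¬ Z.rel b u := by
            have hub : Z.rel u b := htrZ h1 hab
            by_cases hbu : Z.rel b u
            · exact absurd hab (hnoDK a h1 h2 b (Or.inr ⟨hub, hbu⟩))
            · exact ⟨hub, hbu⟩
          rw [hs0neg a haS, hs0neg b (hDnotS b hbD.1 hbD.2)]
          exact hab
      have hopen : ∀ a, Relation.ReflTransGen Z.rel v a → ∀ v', Z.rel (s0 a) v' →
          ∃ b, Relation.ReflTransGen Z.rel v b ∧ Z.rel a b ∧ s0 b = v' := by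
        intro a ha v' hrel
        by_cases haS : ∃ k, (k = u ∨ (Z.rel u k ∧ Z.rel k u)) ∧ m.toFun k = m.toFun a
        · obtain ⟨hsaK, hsam⟩ := hs0pos a haS
          rcases hsucc _ hsaK v' hrel with hv'K | ⟨h1, h2⟩
          · obtain ⟨x'', hax'', hmx''⟩ := m.isPMorphism.2 a (m.toFun v')
              (by rw [← hsam]; exact m.isPMorphism.1 hrel)
            have hx''S : ∃ k, (k = u ∨ (Z.rel u k ∧ Z.rel k u)) ∧ m.toFun k = m.toFun x'' :=
              ⟨v', hv'K, hmx''.symm⟩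
            refine ⟨x'', ha.tail hax'', hax'', ?_⟩
            exact hKinj _ (hs0pos x'' hx''S).1 _ hv'K (by rw [(hs0pos x'' hx''S).2, hmx''])
          · have hav' : Z.rel a v' := hDS a haS v' h1 h2
            exact ⟨v', ha.tail hav', hav', hs0neg v' (hDnotS v' h1 h2)⟩
        · obtain ⟨h1, h2⟩ := (hdich a ha).resolve_left haS
          rw [hs0neg a haS] at hrel
          have hv'D : Z.rel u v' ∧ ¬ Z.rel v' u := by
            have hub : Z.rel u v' := htrZ h1 hrel
            by_cases hvu : Z.rel v' u
            · exact absurd hrel (hnoDK a h1 h2 v' (Or.inr ⟨hub, hvu⟩))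
            · exact ⟨hub, hvu⟩
          exact ⟨v', ha.tail hrel, hrel, hs0neg v' (hDnotS v' hv'D.1 hv'D.2)⟩
      have hs0v : s0 v = u := by
        have hvS : ∃ k, (k = u ∨ (Z.rel u k ∧ Z.rel k u)) ∧ m.toFun k = m.toFun v :=
          ⟨u, Or.inl rfl, hmuv⟩
        exact hKinj _ (hs0pos v hvS).1 _ (Or.inl rfl) (by rw [(hs0pos v hvS).2, ← hmuv])
      refine ⟨{w | Relation.ReflTransGen Z.rel v w}, fun w hw w' hr => hw.tail hr,
        fun x => s0 x.1, ⟨fun a b h => hstab a.1 a.2 b.1 h, ?_⟩, fun x => hs0m x.1, ?_⟩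
      · intro a v' h
        obtain ⟨b, hbG, hab, hs⟩ := hopen a.1 a.2 v' h
        exact ⟨⟨b, hbG⟩, hab, hs⟩
      · refine ⟨⟨v, ReflTransGen.refl⟩, ?_⟩
        show s0 v ≠ v
        rw [hs0v]
        exact huv
    · -- Case II.1 : u irreflexive.  Send u to v, identity elsewhere on the cone of u.
      have hG : ∀ w, Relation.ReflTransGen Z.rel u w → w = u ∨ Z.rel u w :=
        fun w hw => (rtg_of_trans htrZ hw).imp Eq.symm id
      have rigid' : ∀ w, Z.rel u w → ∀ x, m.toFun x = m.toFun w → x = w := by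
        intro w h x hx
        have hwu : ¬ Z.rel w u := fun h' => huu (htrZ h h')
        exact rigid w (star_sub w h hwu) x hx.symm
      set s0 : Z.carrier → Z.carrier := fun x => if x = u then v else x with hs0def
      have hs0u : s0 u = v := by simp [hs0def]
      have hs0n : ∀ x, x ≠ u → s0 x = x := by
        intro x h
        simp [hs0def, h]
      have hs0m : ∀ x, m.toFun (s0 x) = m.toFun x := by
        intro x
        by_cases h : x = u
        · rw [h, hs0u, ← hmuv]
        · rw [hs0n x h]
      have hstab : ∀ a, Relation.ReflTransGen Z.rel u a → ∀ b, Z.rel a b →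
          Z.rel (s0 a) (s0 b) := by
        intro a ha b hab
        by_cases hau : a = u
        · rw [hau] at hab
          by_cases hbu : b = u
          · rw [hbu] at hab; exact absurd hab huu
          · rw [hau, hs0u, hs0n b hbu]
            have h1 : Y.rel (m.toFun v) (m.toFun b) := by
              rw [← hmuv]; exact m.isPMorphism.1 hab
            obtain ⟨t, hvt, hmt⟩ := m.isPMorphism.2 v (m.toFun b) h1
            rwa [rigid' b hab t hmt] at hvt
        · have hua : Z.rel u a := (hG a ha).resolve_left hau
          by_cases hbu : b = u
          · rw [hbu] at hab; exact absurd (htrZ hua hab) huu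
          · rw [hs0n a hau, hs0n b hbu]; exact hab
      have hopen : ∀ a, Relation.ReflTransGen Z.rel u a → ∀ v', Z.rel (s0 a) v' →
          ∃ b, Relation.ReflTransGen Z.rel u b ∧ Z.rel a b ∧ s0 b = v' := by
        intro a ha v' hrel
        by_cases hau : a = u
        · rw [hau, hs0u] at hrel
          have h1 : Y.rel (m.toFun u) (m.toFun v') := by
            rw [hmuv]; exact m.isPMorphism.1 hrel
          obtain ⟨w', huw', hmw'⟩ := m.isPMorphism.2 u (m.toFun v') h1
          have hw'u : w' ≠ u := fun e => huu (e ▸ huw')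
          have hv'w : v' = w' := rigid' w' huw' v' hmw'.symm
          refine ⟨w', ReflTransGen.single huw', ?_, ?_⟩
          · rw [hau]; exact huw'
          · rw [hs0n w' hw'u]; exact hv'w.symm
        · have hua : Z.rel u a := (hG a ha).resolve_left hau
          rw [hs0n a hau] at hrel
          have hv'u : v' ≠ u := fun e => huu (htrZ hua (e ▸ hrel))
          exact ⟨v', ha.tail hrel, hrel, hs0n v' hv'u⟩
      refine ⟨{w | Relation.ReflTransGen Z.rel u w}, fun w hw w' hr => hw.tail hr,
        fun x => s0 x.1, ⟨fun a b h => hstab a.1 a.2 b.1 h, ?_⟩, fun x => hs0m x.1, ?_⟩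
      · intro a v' h
        obtain ⟨b, hbG, hab, hs⟩ := hopen a.1 a.2 v' h
        exact ⟨⟨b, hbG⟩, hab, hs⟩
      · refine ⟨⟨u, ReflTransGen.refl⟩, ?_⟩
        show s0 u ≠ u
        rw [hs0u]
        exact fun h => huv h.symm

end Auxiliary

/-- Let `𝒞` be a class of locally finite transitive Kripke frames
closed under generated subframes, surjective p-morphic images and binary disjoint
unions.  In the full subcategory of `KFr` on `𝒞`, a morphism `f : W → V` is an
extremal epimorphism iff it is surjective. -/
theorem statement5 (𝒞 : Set KFrame.{u})
    (hlf : ∀ W ∈ 𝒞, W.LocallyFinite)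
    (htr : ∀ W ∈ 𝒞, Transitive W.rel)
    (hgen : ∀ W ∈ 𝒞, ∀ G : Set W.carrier,
      (∀ w ∈ G, ∀ w', W.rel w w' → w' ∈ G) → KFrame.subframe W G ∈ 𝒞)
    (himg : ∀ W ∈ 𝒞, ∀ V : KFrame.{u},
      (∃ f : PMor W V, Function.Surjective f.toFun) → V ∈ 𝒞)
    (hsum : ∀ W ∈ 𝒞, ∀ V ∈ 𝒞, KFrame.sum W V ∈ 𝒞)
    (X Y : ObjectProperty.FullSubcategory (fun W => W ∈ 𝒞)) (f : X ⟶ Y) :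
    _root_.ExtremalEpi f ↔ Function.Surjective f.hom.toFun := by
  constructor
  · -- extremal epi → surjective : factor through the image subframe.
    rintro ⟨hepi, hfact⟩
    have hRup : ∀ v_ ∈ Set.range f.hom.toFun, ∀ v', Y.obj.rel v_ v' → v' ∈ Set.range f.hom.toFun := by
      rintro v_ ⟨w, rfl⟩ v' hv'
      obtain ⟨w', _, rfl⟩ := f.hom.isPMorphism.2 w v' hv'
      exact ⟨w', rfl⟩
    let Zc : ObjectProperty.FullSubcategory (fun W => W ∈ 𝒞) :=
      ⟨KFrame.subframe Y.obj (Set.range f.hom.toFun), hgen Y.obj Y.property _ hRup⟩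
    let g' : PMor X.obj Zc.obj := ⟨fun w => ⟨f.hom.toFun w, ⟨w, rfl⟩⟩,
      fun a b h => f.hom.isPMorphism.1 h,
      fun w v' h => by
        obtain ⟨w', hw', he⟩ := f.hom.isPMorphism.2 w v'.1 h
        exact ⟨w', hw', Subtype.ext he⟩⟩
    let mι' : PMor Zc.obj Y.obj := ⟨Subtype.val, incl_pmor hRup⟩
    let g : X ⟶ Zc := ⟨g'⟩
    let mι : Zc ⟶ Y := ⟨mι'⟩
    have hmono : Mono mι := ⟨fun g1 g2 h => InducedCategory.hom_ext (PMor.ext (funext fun t =>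
      Subtype.ext (congrFun (congrArg (fun k => k.hom.toFun) h) t)))⟩
    have hiso := hfact g mι hmono (InducedCategory.hom_ext (PMor.ext rfl))
    obtain ⟨minv, _, him⟩ := hiso.out
    intro y
    have hy : mι.hom.toFun (minv.hom.toFun y) = y := congrFun (congrArg (fun k => k.hom.toFun) him) y
    exact hy ▸ (minv.hom.toFun y).2
  · -- surjective → extremal epi
    intro hsurj
    constructor
    · exact ⟨fun g1 g2 hgg => InducedCategory.hom_ext (PMor.ext (funext fun y => by
        obtain ⟨x, rfl⟩ := hsurj y
        exact congrFun (congrArg (fun k => k.hom.toFun) hgg) x))⟩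
    · intro T g mmor hmono hfact
      have hms : Function.Surjective mmor.hom.toFun := by
        intro y
        obtain ⟨x, rfl⟩ := hsurj y
        exact ⟨g.hom.toFun x, congrFun (congrArg (fun k => k.hom.toFun) hfact) x⟩
      have hmi : Function.Injective mmor.hom.toFun := by
        by_contra hni
        simp only [Function.Injective, not_forall] at hni
        obtain ⟨a, b, hmab, hab⟩ := hni
        obtain ⟨G, hGup, s, hs, hsm, x0, hx0⟩ :=
          key_lemma (hlf T.obj T.property) (htr T.obj T.property) mmor.hom a b hab hmab
        let Tsub : ObjectProperty.FullSubcategory (fun W => W ∈ 𝒞) :=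
          ⟨KFrame.subframe T.obj G, hgen T.obj T.property G hGup⟩
        let h1' : PMor Tsub.obj T.obj := ⟨Subtype.val, incl_pmor hGup⟩
        let h2' : PMor Tsub.obj T.obj := ⟨s, hs⟩
        let h1 : Tsub ⟶ T := ⟨h1'⟩
        let h2 : Tsub ⟶ T := ⟨h2'⟩
        have hcomp : h1 ≫ mmor = h2 ≫ mmor := InducedCategory.hom_ext (PMor.ext (funext fun x => (hsm x).symm))
        have heq := hmono.right_cancellation h1 h2 hcomp
        exact hx0 (congrFun (congrArg (fun k => k.hom.toFun) heq.symm) x0)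
      let e := Equiv.ofBijective mmor.hom.toFun ⟨hmi, hms⟩
      have hminv_stab : ∀ ⦃a b⦄, Y.obj.rel a b → T.obj.rel (e.symm a) (e.symm b) := by
        intro a b hab
        obtain ⟨w', hw', hmw'⟩ := mmor.hom.isPMorphism.2 (e.symm a) b
          (by rw [show mmor.hom.toFun (e.symm a) = a from e.apply_symm_apply a]; exact hab)
        have hbw : e.symm b = w' := hmi ((e.apply_symm_apply b).trans hmw'.symm)
        rwa [hbw]
      have hminv_open : ∀ (a : Y.obj.carrier) z', T.obj.rel (e.symm a) z' →
          ∃ b, Y.obj.rel a b ∧ e.symm b = z' := by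
        intro a z' h
        refine ⟨mmor.hom.toFun z', ?_, e.symm_apply_apply z'⟩
        have h2 := mmor.hom.isPMorphism.1 h
        rwa [show mmor.hom.toFun (e.symm a) = a from e.apply_symm_apply a] at h2
      let minv' : PMor Y.obj T.obj := ⟨e.symm, hminv_stab, hminv_open⟩
      let minv : Y ⟶ T := ⟨minv'⟩
      exact ⟨⟨minv, InducedCategory.hom_ext (PMor.ext (funext fun t => e.symm_apply_apply t)),
        InducedCategory.hom_ext (PMor.ext (funext fun y => e.apply_symm_apply y))⟩⟩
end

section
/- Let W be any Kripke frame and let [2] be the two-element reflexive chain. If f, g : [2] → W are p-morphisms with f(1) = g(1), then f = g. -/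
/-- The two-element reflexive chain `[2]`, realized as `Fin 2` with `i ≺ j ↔ i ≤ j`
(so `0` plays the role of the root `1` of `{1, 2}`). -/
def chainRel2 : Fin 2 → Fin 2 → Prop := (· ≤ ·)

/-
Both `g 1` and `f 1` are successors of the common root image, so by openness each lies in
the image of the other map: `g 1 ∈ {f 0, f 1}` and `f 1 ∈ {g 0, g 1}`. The only case not
giving `f 1 = g 1` outright is `g 1 = f 0` and `f 1 = g 0`, and then all four values coincide.
-/

theorem IsPMorphism.mem_range_of_rel {W V : Type*} {rW : W → W → Prop} {rV : V → V → Prop}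
    {f : W → V} (hf : IsPMorphism rW rV f) {w : W} {v : V} (hv : rV (f w) v) :
    v ∈ Set.range f :=
  let ⟨w', _, hw'⟩ := hf.2 w v hv
  ⟨w', hw'⟩

theorem chainRel2_zero_one : chainRel2 0 1 :=
  Fin.zero_le 1

theorem IsPMorphism.one_mem_range_of_zero_eq {W : Type*} {rW : W → W → Prop} {f g : Fin 2 → W}
    (hf : IsPMorphism chainRel2 rW f) (hg : IsPMorphism chainRel2 rW g) (h : f 0 = g 0) :
    g 1 ∈ Set.range f :=
  hf.mem_range_of_rel (h ▸ hg.1 chainRel2_zero_one)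

/-- For any Kripke frame `W`, two p-morphisms `f, g : [2] → W` from
the two-element reflexive chain that agree on the root are equal. -/
theorem statement12 {W : Type*} (rW : W → W → Prop) (f g : Fin 2 → W)
    (hf : IsPMorphism chainRel2 rW f) (hg : IsPMorphism chainRel2 rW g)
    (h : f 0 = g 0) :
    f = g := by
  obtain ⟨i, hi⟩ := hf.one_mem_range_of_zero_eq hg h
  obtain ⟨j, hj⟩ := hg.one_mem_range_of_zero_eq hf h.symm
  have h1 : f 1 = g 1 := by
    fin_cases i <;> fin_cases j <;> simp_all
  funext k
  fin_cases k
  · exact h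
  · exact h1
end
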